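/- arXiv:math/0411335 — 2 statements merged into one kernel-verified Lean document; each statement's English description precedes it below -/
import Mathlib

section
/- For the semidirect product E = ℤ² ⋊_φ ℤ given by a matrix φ ∈ GL(2,ℤ), if φ has no nonzero fixed vector in ℤ², then ℤ² (the fiber subgroup) is the unique normal subgroup of E isomorphic to ℤ ⊕ ℤ with infinite cyclic quotient. -/
open Matrix

/-- The automorphism of `Multiplicative (Fin 2 → ℤ)` (the multiplicative version of `ℤ²`)
given by an invertible integer matrix acting by `mulVec`. -/
def matAutFun (A : GL (Fin 2) ℤ) : MulAut (Multiplicative (Fin 2 → ℤ)) where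
  toFun v := Multiplicative.ofAdd ((A : Matrix (Fin 2) (Fin 2) ℤ).mulVec v.toAdd)
  invFun v := Multiplicative.ofAdd ((↑A⁻¹ : Matrix (Fin 2) (Fin 2) ℤ).mulVec v.toAdd)
  left_inv v := by
    show Multiplicative.ofAdd ((↑A⁻¹ : Matrix (Fin 2) (Fin 2) ℤ).mulVec ((A : Matrix (Fin 2) (Fin 2) ℤ).mulVec (Multiplicative.toAdd v))) = v
    rw [Matrix.mulVec_mulVec, ← Units.val_mul, inv_mul_cancel, Units.val_one, Matrix.one_mulVec]
    rfl
  right_inv v := by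
    show Multiplicative.ofAdd ((A : Matrix (Fin 2) (Fin 2) ℤ).mulVec ((↑A⁻¹ : Matrix (Fin 2) (Fin 2) ℤ).mulVec (Multiplicative.toAdd v))) = v
    rw [Matrix.mulVec_mulVec, ← Units.val_mul, mul_inv_cancel, Units.val_one, Matrix.one_mulVec]
    rfl
  map_mul' u v := congrArg Multiplicative.ofAdd (Matrix.mulVec_add _ _ _)

/-- `GL(2,ℤ) → Aut(ℤ²)`, as a homomorphism into multiplicative automorphisms. -/
def matAut : GL (Fin 2) ℤ →* MulAut (Multiplicative (Fin 2 → ℤ)) where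
  toFun := matAutFun
  map_one' := by ext v; simp [matAutFun, Matrix.one_mulVec]
  map_mul' A B := by
    refine MulEquiv.ext fun v => ?_
    show Multiplicative.ofAdd (((A * B : GL (Fin 2) ℤ) : Matrix (Fin 2) (Fin 2) ℤ).mulVec (Multiplicative.toAdd v)) =
      Multiplicative.ofAdd ((A : Matrix (Fin 2) (Fin 2) ℤ).mulVec ((B : Matrix (Fin 2) (Fin 2) ℤ).mulVec (Multiplicative.toAdd v)))
    rw [Matrix.mulVec_mulVec, Units.val_mul]

/-- The semidirect product `ℤ² ⋊_φ ℤ`, where the generator of `ℤ` acts by the matrix `φ`. -/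
abbrev TorusBundleGroup (φ : GL (Fin 2) ℤ) : Type :=
  SemidirectProduct (Multiplicative (Fin 2 → ℤ)) (Multiplicative ℤ)
    (zpowersHom (MulAut (Multiplicative (Fin 2 → ℤ))) (matAut φ))

/-!
Since `E ⧸ N ≅ ℤ` is abelian, `N` contains every commutator `⁅t, w⁆ = (φ - 1) w`, hence
`det (φ - 1) • u` for every `u ∈ ℤ²`. As `φ` fixes no nonzero vector, `det (φ - 1) ≠ 0`, and as
`E ⧸ N` is torsion-free, `ℤ² ≤ N`. Conversely, if `N` contained an element `u tᵏ` with `k ≠ 0`,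
then `tᵏ ∈ N`, so `t ∈ N` by torsion-freeness again, and `N = E`, which is absurd.
-/

open scoped commutatorElement

section QuotientGroup
variable {G : Type*} [Group G] {N : Subgroup G} [N.Normal]

theorem Subgroup.commutatorElement_mem_of_isMulCommutative [IsMulCommutative (G ⧸ N)]
    (g h : G) : ⁅g, h⁆ ∈ N :=
  Subgroup.Normal.quotient_commutative_iff_commutator_le.mp ‹_›
    (Subgroup.commutator_mem_commutator (Subgroup.mem_top g) (Subgroup.mem_top h))

theorem Subgroup.mem_of_zpow_mem [IsMulTorsionFree (G ⧸ N)] {g : G} {k : ℤ} (hk : k ≠ 0)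
    (h : g ^ k ∈ N) : g ∈ N := by
  rw [← QuotientGroup.eq_one_iff] at h ⊢
  rwa [QuotientGroup.mk_zpow, IsMulTorsionFree.zpow_eq_one_iff_left hk] at h

end QuotientGroup

namespace SemidirectProduct
variable {K H : Type*} [Group K] [Group H] {ψ : H →* MulAut K}

theorem commutatorElement_inr_inl (h : H) (k : K) :
    ⁅(inr h : K ⋊[ψ] H), (inl k : K ⋊[ψ] H)⁆ = inl (ψ h k * k⁻¹) := by
  rw [commutatorElement_def, map_mul, inl_aut, map_inv, map_inv]

theorem eq_top_of_range_inl_le_of_range_inr_le {N : Subgroup (K ⋊[ψ] H)}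
    (hK : (inl : K →* K ⋊[ψ] H).range ≤ N) (hH : (inr : H →* K ⋊[ψ] H).range ≤ N) : N = ⊤ :=
  eq_top_iff.mpr fun x _ ↦ inl_left_mul_inr_right x ▸
    N.mul_mem (hK ⟨x.left, rfl⟩) (hH ⟨x.right, rfl⟩)

theorem range_inl_eq_of_le [IsCyclic H] {N : Subgroup (K ⋊[ψ] H)} [N.Normal]
    [IsMulTorsionFree ((K ⋊[ψ] H) ⧸ N)] [Nontrivial ((K ⋊[ψ] H) ⧸ N)] (hN : inl.range ≤ N) :
    inl.range = N := by
  refine le_antisymm hN fun x hx ↦ ?_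
  obtain ⟨g, hg⟩ := IsCyclic.exists_generator (α := H)
  obtain ⟨k, hk⟩ := Subgroup.mem_zpowers_iff.mp (hg x.right)
  rw [range_inl_eq_ker_rightHom, MonoidHom.mem_ker, rightHom_eq_right, ← hk]
  rcases eq_or_ne k 0 with rfl | hk0
  · exact zpow_zero g
  have hgN : inr g ∈ N := by
    refine Subgroup.mem_of_zpow_mem hk0 ?_
    rw [← map_zpow, hk, eq_inv_mul_of_mul_eq (inl_left_mul_inr_right x)]
    exact N.mul_mem (N.inv_mem (hN ⟨_, rfl⟩)) hx
  have hNtop : N = ⊤ := eq_top_of_range_inl_le_of_range_inr_le hN (by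
    rintro _ ⟨h, rfl⟩
    obtain ⟨m, rfl⟩ := Subgroup.mem_zpowers_iff.mp (hg h)
    simpa using N.zpow_mem hgN m)
  subst hNtop
  exact absurd (QuotientGroup.subsingleton_quotient_top (G := K ⋊[ψ] H)) (not_subsingleton _)

end SemidirectProduct

theorem Matrix.det_sub_one_ne_zero {n R : Type*} [Fintype n] [DecidableEq n] [CommRing R]
    [IsDomain R] {A : Matrix n n R} (hA : ∀ v, v ≠ 0 → A *ᵥ v ≠ v) : (A - 1).det ≠ 0 := by
  intro h
  obtain ⟨v, hv, hAv⟩ := exists_mulVec_eq_zero_iff.mpr h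
  exact hA v hv (sub_eq_zero.mp (by rwa [sub_mulVec, one_mulVec] at hAv))

namespace TorusBundleGroup
variable (φ : GL (Fin 2) ℤ) {N : Subgroup (TorusBundleGroup φ)} [N.Normal]

theorem inl_sub_one_mulVec_mem [IsMulCommutative (TorusBundleGroup φ ⧸ N)] (w : Fin 2 → ℤ) :
    (SemidirectProduct.inl (Multiplicative.ofAdd (((φ : Matrix (Fin 2) (Fin 2) ℤ) - 1) *ᵥ w)) :
      TorusBundleGroup φ) ∈ N := by
  have := Subgroup.commutatorElement_mem_of_isMulCommutative (N := N)
    (SemidirectProduct.inr (Multiplicative.ofAdd 1)) (SemidirectProduct.inl (Multiplicative.ofAdd w))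
  rw [SemidirectProduct.commutatorElement_inr_inl] at this
  convert this using 2
  rw [sub_mulVec, one_mulVec, ofAdd_sub, div_eq_mul_inv]
  rfl

theorem range_inl_le [IsMulCommutative (TorusBundleGroup φ ⧸ N)]
    [IsMulTorsionFree (TorusBundleGroup φ ⧸ N)]
    (hdet : ((φ : Matrix (Fin 2) (Fin 2) ℤ) - 1).det ≠ 0) :
    (SemidirectProduct.inl : Multiplicative (Fin 2 → ℤ) →* TorusBundleGroup φ).range ≤ N := by
  rintro _ ⟨u, rfl⟩
  refine Subgroup.mem_of_zpow_mem hdet ?_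
  have := inl_sub_one_mulVec_mem φ (N := N) (adjugate (↑φ - 1) *ᵥ u.toAdd)
  rwa [mulVec_mulVec, mul_adjugate, smul_mulVec, one_mulVec, ofAdd_zsmul, ofAdd_toAdd,
    map_zpow] at this

end TorusBundleGroup

theorem unique_fiber_subgroup_general (φ : GL (Fin 2) ℤ)
    (hfix : ∀ v : Fin 2 → ℤ, v ≠ 0 → (φ : Matrix (Fin 2) (Fin 2) ℤ).mulVec v ≠ v)
    (N : Subgroup (TorusBundleGroup φ)) [N.Normal]
    (hQ : Nonempty ((TorusBundleGroup φ ⧸ N) ≃* Multiplicative ℤ)) :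
    N = (SemidirectProduct.inl :
      Multiplicative (Fin 2 → ℤ) →* TorusBundleGroup φ).range := by
  obtain ⟨q⟩ := hQ
  have : IsMulCommutative (TorusBundleGroup φ ⧸ N) :=
    IsMulCommutative.of_comm fun a b ↦ q.injective (by rw [map_mul, map_mul, mul_comm])
  have : IsMulTorsionFree (TorusBundleGroup φ ⧸ N) := q.injective.isMulTorsionFree q.toMonoidHom
  have : Nontrivial (TorusBundleGroup φ ⧸ N) := q.toEquiv.nontrivial
  exact (SemidirectProduct.range_inl_eq_of_le
    (TorusBundleGroup.range_inl_le φ (Matrix.det_sub_one_ne_zero hfix))).symm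

/-- If `φ ∈ GL(2,ℤ)` fixes no nonzero vector of `ℤ²`, then the fiber subgroup `ℤ² × {0}`
is the unique normal subgroup of `E = ℤ² ⋊_φ ℤ` isomorphic to `ℤ ⊕ ℤ` with quotient
isomorphic to `ℤ`. -/
theorem unique_fiber_subgroup (φ : GL (Fin 2) ℤ)
    (hfix : ∀ v : Fin 2 → ℤ, v ≠ 0 → (φ : Matrix (Fin 2) (Fin 2) ℤ).mulVec v ≠ v)
    (N : Subgroup (TorusBundleGroup φ)) [N.Normal]
    (hN : Nonempty (N ≃* Multiplicative (ℤ × ℤ)))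
    (hQ : Nonempty ((TorusBundleGroup φ ⧸ N) ≃* Multiplicative ℤ)) :
    N = (SemidirectProduct.inl :
      Multiplicative (Fin 2 → ℤ) →* TorusBundleGroup φ).range :=
  unique_fiber_subgroup_general φ hfix N hQ
end

section
/- In a free group, if a nontrivial element a normalizes a cyclic subgroup generated by c in the sense a c^k a⁻¹ ∈ ⟨c⟩ for some k ≠ 0, then a commutes with c (equivalently a ∈ the centralizer of c, which is the maximal cyclic subgroup containing c). -/
/-!
If `c ≠ 1`, its reduced powers are `c ^ n = u D^|n| u⁻¹` with `D` the nonempty cyclic reduction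
of `c`, so the length of `c ^ n` grows exactly like `|n| |D|` up to a constant. Conjugation by `a`
changes lengths by at most `2 |a|`; applying `a * c ^ (k m) * a⁻¹ = c ^ (l m)` for large `m`
forces `|l| ≤ |k|`, and symmetrically `|k| ≤ |l|`. Free groups have unique roots, so `l = k`
gives `a c a⁻¹ = c`, while `l = -k` is impossible: `a x a⁻¹ = x⁻¹` yields `(a x)² = a²`.
-/

section TorsionFree

variable {G : Type*} [Group G] [IsMulTorsionFree G]

theorem eq_one_of_conj_eq_inv {a x : G} (h : a * x * a⁻¹ = x⁻¹) : x = 1 := by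
  have hxa : x * a = a * x⁻¹ := by
    calc x * a = (a * x * a⁻¹)⁻¹ * a := by rw [h, inv_inv]
      _ = a * x⁻¹ := by group
  have hsq : (a * x) ^ 2 = a ^ 2 := by
    calc (a * x) ^ 2 = a * (x * a) * x := by simp only [sq, mul_assoc]
      _ = a ^ 2 := by rw [hxa, sq]; group
  simpa using pow_left_injective two_ne_zero hsq

theorem commute_of_conj_zpow_eq_self {a c : G} {k : ℤ} (hk : k ≠ 0)
    (h : a * c ^ k * a⁻¹ = c ^ k) : Commute a c := by
  have hconj : a * c * a⁻¹ = c := zpow_left_injective hk (by simpa only [conj_zpow] using h)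
  rw [Commute, SemiconjBy, ← mul_inv_eq_iff_eq_mul, hconj]

end TorsionFree

namespace FreeGroup

open reduceCyclically

variable {α : Type*}

section Norm

variable [DecidableEq α]

theorem norm_pow (x : FreeGroup α) {n : ℕ} (hn : n ≠ 0) :
    norm (x ^ n) =
      2 * (conjugator x.toWord).length + n * (reduceCyclically x.toWord).length := by
  simp only [norm, toWord_pow, reduce_flatten_replicate isReduced_toWord, hn, ↓reduceIte,
    List.append_assoc, List.length_append, List.length_flatten, List.map_replicate,
    List.sum_replicate, smul_eq_mul, invRev_length]
  ring

theorem norm_zpow (x : FreeGroup α) {n : ℤ} (hn : n ≠ 0) :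
    norm (x ^ n) =
      2 * (conjugator x.toWord).length + n.natAbs * (reduceCyclically x.toWord).length := by
  obtain ⟨m, rfl | rfl⟩ := Int.eq_nat_or_neg n <;>
    simp_all [zpow_neg, norm_pow]

theorem norm_zpow_le (x : FreeGroup α) (n : ℤ) :
    norm (x ^ n) ≤
      2 * (conjugator x.toWord).length + n.natAbs * (reduceCyclically x.toWord).length := by
  rcases eq_or_ne n 0 with rfl | hn
  · simp
  · exact (norm_zpow x hn).le

theorem norm_conj_le (b x : FreeGroup α) : norm (b * x * b⁻¹) ≤ 2 * norm b + norm x := by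
  have h₁ := norm_mul_le (b * x) b⁻¹
  have h₂ := norm_mul_le b x
  rw [norm_inv_eq] at h₁
  omega

theorem reduceCyclically_toWord_ne_nil {x : FreeGroup α} (hx : x ≠ 1) :
    reduceCyclically x.toWord ≠ [] := by
  intro h
  apply hx
  have hx' := conj_conjugator_reduceCyclically x.toWord
  rw [h, List.append_nil] at hx'
  rw [← mk_toWord (x := x), ← hx', ← mul_mk, ← inv_mk, mul_inv_cancel]

end Norm

theorem natAbs_le_of_conj_zpow_eq_zpow {b c : FreeGroup α} {k l : ℤ} (hc : c ≠ 1)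
    (h : b * c ^ k * b⁻¹ = c ^ l) : l.natAbs ≤ k.natAbs := by
  classical
  have hτ : 0 < (reduceCyclically c.toWord).length :=
    List.length_pos_iff.2 (reduceCyclically_toWord_ne_nil hc)
  by_contra! hlt
  set m := 2 * norm b + 2 * (conjugator c.toWord).length + 1 with hm
  have hl : l ≠ 0 := by omega
  have hconj : b * c ^ (k * m) * b⁻¹ = c ^ (l * m) := by
    rw [zpow_mul, zpow_mul, ← h, conj_zpow]
  have hbound := norm_conj_le b (c ^ (k * m))
  rw [hconj, norm_zpow c (mul_ne_zero hl (by positivity))] at hbound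
  have hupper := norm_zpow_le c (k * m)
  simp only [Int.natAbs_mul, Int.natAbs_natCast] at hbound hupper
  set τ := (reduceCyclically c.toWord).length
  have hgap : (k.natAbs + 1) * (m * τ) ≤ l.natAbs * (m * τ) := Nat.mul_le_mul_right _ hlt
  have hmτ : m ≤ m * τ := Nat.le_mul_of_pos_right m hτ
  linarith

end FreeGroup

open FreeGroup in
theorem commute_of_conj_zpow_eq_zpow_general {α : Type*} (a c : FreeGroup α) (hc : c ≠ 1)
    (k l : ℤ) (hk : k ≠ 0)
    (h : a * c ^ k * a⁻¹ = c ^ l) :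
    a * c = c * a := by
  have h' : a⁻¹ * c ^ l * a⁻¹⁻¹ = c ^ k := by rw [← h]; group
  have habs : l.natAbs = k.natAbs :=
    (natAbs_le_of_conj_zpow_eq_zpow hc h).antisymm (natAbs_le_of_conj_zpow_eq_zpow hc h')
  rcases Int.natAbs_eq_natAbs_iff.1 habs with rfl | rfl
  · exact commute_of_conj_zpow_eq_self hk h
  · rw [zpow_neg] at h
    have hck : c ^ k ≠ 1 := by rwa [Ne, IsMulTorsionFree.zpow_eq_one_iff_right hc]
    exact absurd (eq_one_of_conj_eq_inv h) hck

/-- In a free group, if a conjugate of a nonzero power of `c` by `a` is again a nonzero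
power of `c` (with `c ≠ 1`), then `a` commutes with `c`. -/
theorem commute_of_conj_zpow_eq_zpow {α : Type*} (a c : FreeGroup α) (hc : c ≠ 1)
    (k l : ℤ) (hk : k ≠ 0) (hl : l ≠ 0)
    (h : a * c ^ k * a⁻¹ = c ^ l) :
    a * c = c * a :=
  commute_of_conj_zpow_eq_zpow_general a c hc k l hk h
end
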